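/- Let E_φ, E_θ : ℝ^m × ℝ^n → ℝ be smooth and (φ₀, θ₀) ∈ ℝ^m × ℝ^n. A simultaneous gradient descent step with learning rate h produces φ₁(h) = φ₀ − h∇_φE_φ(φ₀, θ₀) and θ₁(h) = θ₀ − h∇_θE_θ(φ₀, θ₀). Consider the modified continuous system φ′ = −∇_φE_φ(φ, θ) + h( −(1/4) ∇_φ‖∇_φE_φ(φ, θ)‖² − (1/2) D_θ(∇_φE_φ)(φ, θ)[∇_θE_θ(φ, θ)] ), θ′ = −∇_θE_θ(φ, θ) + h( −(1/4) ∇_θ‖∇_θE_θ(φ, θ)‖² − (1/2) D_φ(∇_θE_θ)(φ, θ)[∇_φE_φ(φ, θ)] ). Then there exist C > 0 and h₀ > 0 such that for every h ∈ (0, h₀) and every solution (φ, θ) : [0, h] → ℝ^m × ℝ^n of this system with (φ(0), θ(0)) = (φ₀, θ₀), one has ‖φ(h) − φ₁(h)‖ ≤ C h³ and ‖θ(h) − θ₁(h)‖ ≤ C h³. -/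

import Mathlib

/-- Partial gradient with respect to the first player's parameters. -/
noncomputable def grad₁ {m n : ℕ}
    (f : EuclideanSpace ℝ (Fin m) × EuclideanSpace ℝ (Fin n) → ℝ)
    (φ : EuclideanSpace ℝ (Fin m)) (θ : EuclideanSpace ℝ (Fin n)) :
    EuclideanSpace ℝ (Fin m) :=
  gradient (fun x => f (x, θ)) φ

/-- Partial gradient with respect to the second player's parameters. -/
noncomputable def grad₂ {m n : ℕ}
    (f : EuclideanSpace ℝ (Fin m) × EuclideanSpace ℝ (Fin n) → ℝ)
    (φ : EuclideanSpace ℝ (Fin m)) (θ : EuclideanSpace ℝ (Fin n)) :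
    EuclideanSpace ℝ (Fin n) :=
  gradient (fun y => f (φ, y)) θ

section Aux
set_option linter.unusedSectionVars false

open Set InnerProductSpace ContinuousLinearMap

variable {A B : Type*} [NormedAddCommGroup A] [InnerProductSpace ℝ A] [CompleteSpace A]
  [NormedAddCommGroup B] [InnerProductSpace ℝ B] [CompleteSpace B]

-- smoothness of the partial gradient in both variables jointly
lemma contDiff_partialGrad1 {f : A × B → ℝ} (hf : ContDiff ℝ (⊤ : ℕ∞) f) :
    ContDiff ℝ ((⊤ : ℕ∞) : WithTop ℕ∞) (fun p : A × B => gradient (fun x => f (x, p.2)) p.1) := by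
  have hf' : ContDiff ℝ (((⊤ : ℕ∞) + 1 : ℕ∞) : WithTop ℕ∞) f := hf.of_le (by simp)
  have key : (fun p : A × B => gradient (fun x => f (x, p.2)) p.1)
      = fun p : A × B => (toDual ℝ A).symm
          (((compL ℝ A (A × B) ℝ).flip (inl ℝ A B)) (fderiv ℝ f p)) := by
    funext p
    have h1 : HasFDerivAt (fun x : A => f (x, p.2))
        ((fderiv ℝ f p).comp (inl ℝ A B)) p.1 := by
      have := ((hf.differentiable (by simp)) p).hasFDerivAt
      exact this.comp p.1 (hasFDerivAt_prodMk_left p.1 p.2)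
    simp [gradient, h1.fderiv]
  rw [key]
  exact ((toDual ℝ A).symm.contDiff.comp
    (((compL ℝ A (A × B) ℝ).flip (inl ℝ A B)).contDiff.comp
      (hf.fderiv_right ((by simp)))))

lemma contDiff_partialGrad2 {f : A × B → ℝ} (hf : ContDiff ℝ (⊤ : ℕ∞) f) :
    ContDiff ℝ ((⊤ : ℕ∞) : WithTop ℕ∞) (fun p : A × B => gradient (fun y => f (p.1, y)) p.2) := by
  have hswap : ContDiff ℝ (⊤ : ℕ∞) (fun q : B × A => f (q.2, q.1)) :=
    hf.comp ((ContinuousLinearEquiv.prodComm ℝ B A).contDiff)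
  have := (contDiff_partialGrad1 hswap).comp
    ((ContinuousLinearEquiv.prodComm ℝ A B).contDiff (n := ((⊤ : ℕ∞) : WithTop ℕ∞)))
  exact this

lemma contDiff_gradient {f : A → ℝ} (hf : ContDiff ℝ (⊤ : ℕ∞) f) :
    ContDiff ℝ ((⊤ : ℕ∞) : WithTop ℕ∞) (gradient f) := by
  have : gradient f = ((toDual ℝ A).symm) ∘ (fderiv ℝ f) := rfl
  rw [this]
  exact (toDual ℝ A).symm.contDiff.comp (hf.fderiv_right (by simp))

lemma gradient_norm_sq_eq {f : A → ℝ} (hf : ContDiff ℝ (⊤ : ℕ∞) f) (x : A) :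
    gradient (fun y => ‖gradient f y‖ ^ 2) x
      = (2 : ℝ) • fderiv ℝ (gradient f) x (gradient f x) := by
  have hG : ContDiff ℝ ((⊤ : ℕ∞) : WithTop ℕ∞) (gradient f) := contDiff_gradient hf
  have hGd : Differentiable ℝ (gradient f) := hG.differentiable (by simp)
  have hsymm : IsSymmSndFDerivAt ℝ f x :=
    (hf.contDiffAt).isSymmSndFDerivAt ((by rw [minSmoothness_of_isRCLikeNormedField]; exact WithTop.coe_le_coe.mpr le_top))
  have hDG : ∀ u v : A, ⟪fderiv ℝ (gradient f) x u, v⟫_ℝ = fderiv ℝ (fderiv ℝ f) x u v := by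
    intro u v
    have h1 := LinearIsometryEquiv.comp_fderiv
      ((toDual ℝ A).symm : StrongDual ℝ A ≃ₗᵢ[ℝ] A) (f := fderiv ℝ f) (x := x)
    have h2 : gradient f = (((toDual ℝ A).symm : StrongDual ℝ A ≃ₗᵢ[ℝ] A) : StrongDual ℝ A → A) ∘ (fderiv ℝ f) := rfl
    rw [h2, h1]
    exact toDual_symm_apply
  have hder : HasFDerivAt (fun y => ‖gradient f y‖ ^ 2)
      ((fderivInnerCLM ℝ (gradient f x, gradient f x)).comp
        ((fderiv ℝ (gradient f) x).prod (fderiv ℝ (gradient f) x))) x := by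
    have h2 : (fun y => ‖gradient f y‖ ^ 2) = fun y => ⟪gradient f y, gradient f y⟫_ℝ := by
      funext y; rw [real_inner_self_eq_norm_sq]
    rw [h2]
    exact (hGd x).hasFDerivAt.inner ℝ (hGd x).hasFDerivAt
  apply ext_inner_right ℝ
  intro v
  have lhs : ⟪gradient (fun y => ‖gradient f y‖ ^ 2) x, v⟫_ℝ
      = fderiv ℝ (fun y => ‖gradient f y‖ ^ 2) x v := toDual_symm_apply
  rw [lhs, hder.fderiv]
  simp only [ContinuousLinearMap.comp_apply, ContinuousLinearMap.prod_apply,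
    fderivInnerCLM_apply, real_inner_smul_left]
  have e1 : ⟪gradient f x, fderiv ℝ (gradient f) x v⟫_ℝ
      = ⟪fderiv ℝ (gradient f) x (gradient f x), v⟫_ℝ := by
    rw [real_inner_comm, hDG v (gradient f x), hDG (gradient f x) v, hsymm.eq]
  have e2 : ⟪fderiv ℝ (gradient f) x v, gradient f x⟫_ℝ
      = ⟪fderiv ℝ (gradient f) x (gradient f x), v⟫_ℝ := by
    rw [← e1, real_inner_comm]
  rw [e2, e1]; ring

variable {V : Type*} [NormedAddCommGroup V] [NormedSpace ℝ V]

lemma fderiv_comp_inl {G : A × B → V} {a : A} {b : B}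
    (hG : DifferentiableAt ℝ G (a, b)) :
    fderiv ℝ (fun x => G (x, b)) a = (fderiv ℝ G (a, b)).comp (inl ℝ A B) :=
  (hG.hasFDerivAt.comp a (hasFDerivAt_prodMk_left a b)).fderiv

lemma fderiv_comp_inr {G : A × B → V} {a : A} {b : B}
    (hG : DifferentiableAt ℝ G (a, b)) :
    fderiv ℝ (fun y => G (a, y)) b = (fderiv ℝ G (a, b)).comp (inr ℝ A B) :=
  (hG.hasFDerivAt.comp b (hasFDerivAt_prodMk_right a b)).fderiv

/-- The simultaneous (negative) gradient vector field. -/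
noncomputable def F0 (f g : A × B → ℝ) : A × B → A × B :=
  fun p => (-(gradient (fun x => f (x, p.2)) p.1), -(gradient (fun y => g (p.1, y)) p.2))

/-- The first-order correction field of the modified equation. -/
noncomputable def F1 (f g : A × B → ℝ) : A × B → A × B :=
  fun p => -(1 / 2 : ℝ) • (fderiv ℝ (F0 f g) p) (F0 f g p)

lemma contDiff_F0 {f g : A × B → ℝ} (hf : ContDiff ℝ (⊤ : ℕ∞) f) (hg : ContDiff ℝ (⊤ : ℕ∞) g) :
    ContDiff ℝ ((⊤ : ℕ∞) : WithTop ℕ∞) (F0 f g) :=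
  ((contDiff_partialGrad1 hf).neg).prodMk ((contDiff_partialGrad2 hg).neg)

lemma contDiff_F1 {f g : A × B → ℝ} (hf : ContDiff ℝ (⊤ : ℕ∞) f) (hg : ContDiff ℝ (⊤ : ℕ∞) g) :
    ContDiff ℝ ((⊤ : ℕ∞) : WithTop ℕ∞) (F1 f g) := by
  have h0 := contDiff_F0 hf hg
  have h1 : ContDiff ℝ ((⊤ : ℕ∞) : WithTop ℕ∞) (fderiv ℝ (F0 f g)) :=
    h0.fderiv_right (by simp)
  have : ContDiff ℝ ((⊤ : ℕ∞) : WithTop ℕ∞)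
      (fun p => (fderiv ℝ (F0 f g) p) (F0 f g p)) := h1.clm_apply h0
  exact this.const_smul _

lemma fderiv_F0_apply {f g : A × B → ℝ} (hf : ContDiff ℝ (⊤ : ℕ∞) f) (hg : ContDiff ℝ (⊤ : ℕ∞) g)
    (p : A × B) (v : A × B) :
    fderiv ℝ (F0 f g) p v
      = (-(fderiv ℝ (fun q : A × B => gradient (fun x => f (x, q.2)) q.1) p v),
         -(fderiv ℝ (fun q : A × B => gradient (fun y => g (q.1, y)) q.2) p v)) := by
  have h1 : DifferentiableAt ℝ (fun q : A × B => gradient (fun x => f (x, q.2)) q.1) p :=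
    ((contDiff_partialGrad1 hf).differentiable (by simp)) p
  have h2 : DifferentiableAt ℝ (fun q : A × B => gradient (fun y => g (q.1, y)) q.2) p :=
    ((contDiff_partialGrad2 hg).differentiable (by simp)) p
  have : HasFDerivAt (F0 f g)
      ((-(fderiv ℝ (fun q : A × B => gradient (fun x => f (x, q.2)) q.1) p)).prod
       (-(fderiv ℝ (fun q : A × B => gradient (fun y => g (q.1, y)) q.2) p))) p :=
    (h1.hasFDerivAt.neg).prodMk (h2.hasFDerivAt.neg)
  rw [this.fderiv]
  rfl

lemma keyA {f g : A × B → ℝ} (hf : ContDiff ℝ (⊤ : ℕ∞) f) (hg : ContDiff ℝ (⊤ : ℕ∞) g) (p : A × B) :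
    -(1 / 4 : ℝ) • gradient (fun x => ‖gradient (fun x' => f (x', p.2)) x‖ ^ 2) p.1
      - (1 / 2 : ℝ) • fderiv ℝ (fun y => gradient (fun x' => f (x', y)) p.1) p.2
          (gradient (fun y => g (p.1, y)) p.2)
    = (F1 f g p).1 := by
  set G1 : A × B → A := fun q => gradient (fun x => f (x, q.2)) q.1 with hG1def
  have hG1 : ContDiff ℝ ((⊤ : ℕ∞) : WithTop ℕ∞) G1 := contDiff_partialGrad1 hf
  have hG1d : Differentiable ℝ G1 := hG1.differentiable (by simp)
  -- the squared-norm gradient term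
  have hfθ : ContDiff ℝ (⊤ : ℕ∞) (fun x => f (x, p.2)) :=
    hf.comp (contDiff_id.prodMk contDiff_const)
  have e1 : gradient (fun x => ‖gradient (fun x' => f (x', p.2)) x‖ ^ 2) p.1
      = (2 : ℝ) • fderiv ℝ (fun x => G1 (x, p.2)) p.1 (G1 p) := by
    have := gradient_norm_sq_eq hfθ p.1
    exact this
  have e2 : fderiv ℝ (fun x => G1 (x, p.2)) p.1 (G1 p)
      = fderiv ℝ G1 p (G1 p, 0) := by
    rw [fderiv_comp_inl (hG1d (p.1, p.2))]
    rfl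
  have e3 : fderiv ℝ (fun y => gradient (fun x' => f (x', y)) p.1) p.2
        (gradient (fun y => g (p.1, y)) p.2)
      = fderiv ℝ G1 p (0, gradient (fun y => g (p.1, y)) p.2) := by
    rw [show (fun y => gradient (fun x' => f (x', y)) p.1) = (fun y => G1 (p.1, y)) from rfl,
      fderiv_comp_inr (hG1d (p.1, p.2))]
    rfl
  have e4 : (F1 f g p).1 = -(1 / 2 : ℝ) •
      fderiv ℝ G1 p (G1 p, gradient (fun y => g (p.1, y)) p.2) := by
    have := fderiv_F0_apply hf hg p (F0 f g p)
    show (-(1 / 2 : ℝ) • (fderiv ℝ (F0 f g) p) (F0 f g p)).1 = _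
    rw [this]
    show -(1 / 2 : ℝ) • -(fderiv ℝ G1 p (F0 f g p)) = _
    rw [show F0 f g p = -(G1 p, gradient (fun y => g (p.1, y)) p.2) from rfl]
    rw [map_neg, neg_neg]
  rw [e1, e2, e3, e4]
  rw [show (G1 p, gradient (fun y => g (p.1, y)) p.2)
      = (G1 p, (0 : B)) + ((0 : A), gradient (fun y => g (p.1, y)) p.2) from by simp,
    map_add]
  module

lemma keyB {f g : A × B → ℝ} (hf : ContDiff ℝ (⊤ : ℕ∞) f) (hg : ContDiff ℝ (⊤ : ℕ∞) g) (p : A × B) :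
    -(1 / 4 : ℝ) • gradient (fun y => ‖gradient (fun y' => g (p.1, y')) y‖ ^ 2) p.2
      - (1 / 2 : ℝ) • fderiv ℝ (fun x => gradient (fun y' => g (x, y')) p.2) p.1
          (gradient (fun x => f (x, p.2)) p.1)
    = (F1 f g p).2 := by
  set G2 : A × B → B := fun q => gradient (fun y => g (q.1, y)) q.2 with hG2def
  have hG2 : ContDiff ℝ ((⊤ : ℕ∞) : WithTop ℕ∞) G2 := contDiff_partialGrad2 hg
  have hG2d : Differentiable ℝ G2 := hG2.differentiable (by simp)
  have hgφ : ContDiff ℝ (⊤ : ℕ∞) (fun y => g (p.1, y)) :=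
    hg.comp (contDiff_const.prodMk contDiff_id)
  have e1 : gradient (fun y => ‖gradient (fun y' => g (p.1, y')) y‖ ^ 2) p.2
      = (2 : ℝ) • fderiv ℝ (fun y => G2 (p.1, y)) p.2 (G2 p) := by
    have := gradient_norm_sq_eq hgφ p.2
    exact this
  have e2 : fderiv ℝ (fun y => G2 (p.1, y)) p.2 (G2 p)
      = fderiv ℝ G2 p (0, G2 p) := by
    rw [fderiv_comp_inr (hG2d (p.1, p.2))]
    rfl
  have e3 : fderiv ℝ (fun x => gradient (fun y' => g (x, y')) p.2) p.1
        (gradient (fun x => f (x, p.2)) p.1)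
      = fderiv ℝ G2 p (gradient (fun x => f (x, p.2)) p.1, 0) := by
    rw [show (fun x => gradient (fun y' => g (x, y')) p.2) = (fun x => G2 (x, p.2)) from rfl,
      fderiv_comp_inl (hG2d (p.1, p.2))]
    rfl
  have e4 : (F1 f g p).2 = -(1 / 2 : ℝ) •
      fderiv ℝ G2 p (gradient (fun x => f (x, p.2)) p.1, G2 p) := by
    have := fderiv_F0_apply hf hg p (F0 f g p)
    show (-(1 / 2 : ℝ) • (fderiv ℝ (F0 f g) p) (F0 f g p)).2 = _
    rw [this]
    show -(1 / 2 : ℝ) • -(fderiv ℝ G2 p (F0 f g p)) = _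
    rw [show F0 f g p = -(gradient (fun x => f (x, p.2)) p.1, G2 p) from rfl]
    rw [map_neg, neg_neg]
  rw [e1, e2, e3, e4]
  rw [show (gradient (fun x => f (x, p.2)) p.1, G2 p)
      = (gradient (fun x => f (x, p.2)) p.1, (0 : B)) + ((0 : A), G2 p) from by simp,
    map_add]
  module


open Set Metric in

set_option maxHeartbeats 1000000 in
theorem main_estimate {E : Type*} [NormedAddCommGroup E] [NormedSpace ℝ E] [ProperSpace E]
    (F₀ F₁ : E → E) (hF0 : ContDiff ℝ ((⊤ : ℕ∞) : WithTop ℕ∞) F₀)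
    (hF1 : ContDiff ℝ ((⊤ : ℕ∞) : WithTop ℕ∞) F₁)
    (x₀ : E) (hkey : F₁ x₀ = -(1 / 2 : ℝ) • fderiv ℝ F₀ x₀ (F₀ x₀)) :
    ∃ C > (0 : ℝ), ∃ h₀ > (0 : ℝ), ∀ h ∈ Set.Ioo (0 : ℝ) h₀, ∀ x : ℝ → E, x 0 = x₀ →
      (∀ t ∈ Set.Icc (0 : ℝ) h, HasDerivAt x (F₀ (x t) + h • F₁ (x t)) t) →
      ‖x h - (x₀ + h • F₀ x₀)‖ ≤ C * h ^ 3 := by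
  have hball : IsCompact (closedBall x₀ 1) := isCompact_closedBall x₀ 1
  have hconv : Convex ℝ (closedBall x₀ 1) := convex_closedBall x₀ 1
  have hx₀ball : x₀ ∈ closedBall x₀ 1 := mem_closedBall_self zero_le_one
  have dF0 : Differentiable ℝ F₀ := hF0.differentiable (by simp)
  have dF1 : Differentiable ℝ F₁ := hF1.differentiable (by simp)
  have hDF0 : ContDiff ℝ ((⊤ : ℕ∞) : WithTop ℕ∞) (fderiv ℝ F₀) :=
    hF0.fderiv_right (by simp)
  have dDF0 : Differentiable ℝ (fderiv ℝ F₀) := hDF0.differentiable (by simp)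
  obtain ⟨M0, hM0⟩ := hball.exists_bound_of_continuousOn hF0.continuous.continuousOn
  obtain ⟨M1, hM1⟩ := hball.exists_bound_of_continuousOn hF1.continuous.continuousOn
  obtain ⟨K0, hK0⟩ := hball.exists_bound_of_continuousOn hDF0.continuous.continuousOn
  obtain ⟨K1, hK1⟩ := hball.exists_bound_of_continuousOn
    ((hF1.fderiv_right (m := ((⊤:ℕ∞) : WithTop ℕ∞)) (by simp)).continuous.continuousOn)
  obtain ⟨K2, hK2⟩ := hball.exists_bound_of_continuousOn
    ((hDF0.fderiv_right (m := ((⊤:ℕ∞) : WithTop ℕ∞)) (by simp)).continuous.continuousOn)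
  set M : ℝ := max M0 0 + max M1 0 + 1 with hMdef
  have hMpos : 0 < M := by positivity
  have hMbound : ∀ z ∈ closedBall x₀ 1, ∀ h : ℝ, h ∈ Icc (0:ℝ) 1 →
      ‖F₀ z + h • F₁ z‖ ≤ M := by
    intro z hz h hh
    calc ‖F₀ z + h • F₁ z‖ ≤ ‖F₀ z‖ + ‖h • F₁ z‖ := norm_add_le _ _
    _ ≤ max M0 0 + max M1 0 := by
        gcongr
        · exact le_trans (hM0 z hz) (le_max_left _ _)
        · rw [norm_smul, Real.norm_eq_abs, abs_of_nonneg hh.1]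
          calc h * ‖F₁ z‖ ≤ 1 * max M1 0 := by
                apply mul_le_mul hh.2 (le_trans (hM1 z hz) (le_max_left _ _))
                  (norm_nonneg _) zero_le_one
          _ = max M1 0 := one_mul _
    _ ≤ M := by rw [hMdef]; linarith
  set K0' : ℝ := max K0 0 + 1 with hK0'def
  set K1' : ℝ := max K1 0 + 1 with hK1'def
  set K2' : ℝ := max K2 0 + 1 with hK2'def
  have hK0'pos : 0 < K0' := by positivity
  have hK1'pos : 0 < K1' := by positivity
  have hK2'pos : 0 < K2' := by positivity
  have lip0 : ∀ a ∈ closedBall x₀ 1, ‖F₀ a - F₀ x₀‖ ≤ K0' * ‖a - x₀‖ := by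
    intro a ha
    exact hconv.norm_image_sub_le_of_norm_fderiv_le (fun z _ => dF0 z)
      (fun z hz => le_trans (hK0 z hz)
        (by rw [hK0'def]; linarith [le_max_left K0 (0:ℝ)])) hx₀ball ha
  have lip1 : ∀ a ∈ closedBall x₀ 1, ‖F₁ a - F₁ x₀‖ ≤ K1' * ‖a - x₀‖ := by
    intro a ha
    exact hconv.norm_image_sub_le_of_norm_fderiv_le (fun z _ => dF1 z)
      (fun z hz => le_trans (hK1 z hz)
        (by rw [hK1'def]; linarith [le_max_left K1 (0:ℝ)])) hx₀ball ha
  have lipD : ∀ a ∈ closedBall x₀ 1, ‖fderiv ℝ F₀ a - fderiv ℝ F₀ x₀‖ ≤ K2' * ‖a - x₀‖ := by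
    intro a ha
    exact hconv.norm_image_sub_le_of_norm_fderiv_le (fun z _ => dDF0 z)
      (fun z hz => le_trans (hK2 z hz)
        (by rw [hK2'def]; linarith [le_max_left K2 (0:ℝ)])) hx₀ball ha
  have taylor : ∀ y ∈ closedBall x₀ 1,
      ‖F₀ y - F₀ x₀ - fderiv ℝ F₀ x₀ (y - x₀)‖ ≤ (K2' * ‖y - x₀‖) * ‖y - x₀‖ := by
    intro y hy
    have hseg : segment ℝ x₀ y ⊆ closedBall x₀ 1 := hconv.segment_subset hx₀ball hy
    have hseg' : segment ℝ x₀ y ⊆ closedBall x₀ ‖y - x₀‖ := by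
      apply (convex_closedBall x₀ ‖y - x₀‖).segment_subset
      · exact mem_closedBall_self (norm_nonneg _)
      · rw [mem_closedBall, dist_eq_norm]
    apply Convex.norm_image_sub_le_of_norm_fderiv_le' (fun z _ => dF0 z)
      (fun z hz => ?_) (convex_segment x₀ y) (left_mem_segment ℝ x₀ y) (right_mem_segment ℝ x₀ y)
    calc ‖fderiv ℝ F₀ z - fderiv ℝ F₀ x₀‖ ≤ K2' * ‖z - x₀‖ := lipD z (hseg hz)
    _ ≤ K2' * ‖y - x₀‖ := by
        apply mul_le_mul_of_nonneg_left _ hK2'pos.le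
        have := mem_closedBall.mp (hseg' hz)
        rwa [dist_eq_norm] at this
  set N : ℝ := ‖fderiv ℝ F₀ x₀‖ with hNdef
  have hNnn : 0 ≤ N := norm_nonneg _
  set C₀ : ℝ := K2' * M ^ 2 + N * ((K0' + K1') * M + max M1 0) + K1' * M + 1 with hC₀def
  have hC₀pos : 0 < C₀ := by positivity
  refine ⟨C₀, hC₀pos, min 1 (1 / (2 * M)), by positivity, ?_⟩
  rintro h ⟨hh0, hh1⟩ x hx0 hderiv
  have hh_le1 : h ≤ 1 := le_of_lt (lt_of_lt_of_le hh1 (min_le_left _ _))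
  have hMh : M * h ≤ 1 / 2 := by
    have : h ≤ 1 / (2 * M) := le_of_lt (lt_of_lt_of_le hh1 (min_le_right _ _))
    rw [le_div_iff₀ (by positivity)] at this
    nlinarith
  set S : Set ℝ := {t | t ∈ Icc (0:ℝ) h ∧ ∀ s ∈ Icc (0:ℝ) t, x s ∈ closedBall x₀ 1}
    with hSdef
  have hS0 : (0:ℝ) ∈ S := by
    refine ⟨⟨le_refl 0, hh0.le⟩, fun s hs => ?_⟩
    have : s = 0 := le_antisymm hs.2 hs.1
    rw [this, hx0]; exact hx₀ball
  have hSne : S.Nonempty := ⟨0, hS0⟩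
  have hSbdd : BddAbove S := ⟨h, fun t ht => ht.1.2⟩
  have key : ∀ t ∈ S, ∀ s ∈ Icc (0:ℝ) t, ‖x s - x₀‖ ≤ M * s := by
    intro t ht
    have hsub : Icc (0:ℝ) t ⊆ Icc (0:ℝ) h := Icc_subset_Icc le_rfl ht.1.2
    have H := norm_image_sub_le_of_norm_deriv_le_segment'
      (f := x) (a := 0) (b := t) (f' := fun u => F₀ (x u) + h • F₁ (x u)) (C := M)
      (fun u hu => ((hderiv u (hsub hu)).hasDerivWithinAt))
      (fun u hu => hMbound (x u) (ht.2 u ⟨hu.1, hu.2.le⟩) h ⟨hh0.le, hh_le1⟩)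
    intro s hs
    have := H s hs
    rwa [hx0, sub_zero] at this
  have hSh : h ∈ S := by
    set T : ℝ := sSup S with hTdef
    have hT0 : 0 ≤ T := le_csSup hSbdd hS0
    have hTh : T ≤ h := csSup_le hSne (fun t ht => ht.1.2)
    have hinit : ∀ s, 0 ≤ s → s < T → x s ∈ closedBall x₀ 1 := by
      intro s hs0 hsT
      obtain ⟨t, htS, hst⟩ := exists_lt_of_lt_csSup hSne hsT
      exact htS.2 s ⟨hs0, hst.le⟩
    have hTball : x T ∈ closedBall x₀ 1 := by
      rcases eq_or_lt_of_le hT0 with hT0' | hT0'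
      · rw [← hT0', hx0]; exact hx₀ball
      · have hcont : ContinuousAt x T := (hderiv T ⟨hT0, hTh⟩).continuousAt
        have htend : Filter.Tendsto x (nhdsWithin T (Iio T)) (nhds (x T)) :=
          hcont.continuousWithinAt.tendsto
        have hev : ∀ᶠ s in nhdsWithin T (Iio T), x s ∈ closedBall x₀ 1 := by
          filter_upwards [Ioo_mem_nhdsLT_of_mem (⟨hT0', le_rfl⟩ : T ∈ Ioc (0:ℝ) T)]
            with s hs
          exact hinit s hs.1.le hs.2
        exact Metric.isClosed_closedBall.mem_of_tendsto htend hev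
    have hTS : T ∈ S := by
      refine ⟨⟨hT0, hTh⟩, fun s hs => ?_⟩
      rcases lt_or_eq_of_le hs.2 with hsT | hsT
      · exact hinit s hs.1 hsT
      · rw [hsT]; exact hTball
    by_contra hhS
    have hTh' : T < h := by
      rcases lt_or_eq_of_le hTh with h' | h'
      · exact h'
      · exact absurd (h' ▸ hTS) hhS
    have hxT : ‖x T - x₀‖ ≤ 1 / 2 := by
      calc ‖x T - x₀‖ ≤ M * T := key T hTS T ⟨hT0, le_rfl⟩
      _ ≤ M * h := by nlinarith
      _ ≤ 1 / 2 := hMh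
    have hcont : ContinuousAt x T := (hderiv T ⟨hT0, hTh⟩).continuousAt
    obtain ⟨δ, hδ0, hδ⟩ := Metric.continuousAt_iff.mp hcont (1/4) (by norm_num)
    set t' : ℝ := min h (T + δ / 2) with ht'def
    have hTt' : T < t' := lt_min hTh' (by linarith)
    have ht'S : t' ∈ S := by
      refine ⟨⟨le_trans hT0 hTt'.le, min_le_left _ _⟩, fun s hs => ?_⟩
      rcases le_or_gt s T with hsT | hsT
      · exact hTS.2 s ⟨hs.1, hsT⟩
      · have hds : dist s T < δ := by
          rw [Real.dist_eq, abs_of_nonneg (by linarith)]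
          have : s ≤ T + δ / 2 := le_trans hs.2 (min_le_right _ _)
          linarith
        have := hδ hds
        rw [mem_closedBall, dist_eq_norm]
        calc ‖x s - x₀‖ ≤ ‖x s - x T‖ + ‖x T - x₀‖ := norm_sub_le_norm_sub_add_norm_sub _ _ _
        _ ≤ 1/4 + 1/2 := by
            apply add_le_add _ hxT
            rw [← dist_eq_norm]
            exact this.le
        _ ≤ 1 := by norm_num
    have : t' ≤ T := le_csSup hSbdd ht'S
    exact absurd hTt' (not_lt.mpr this)
  have bnd : ∀ s ∈ Icc (0:ℝ) h, ‖x s - x₀‖ ≤ M * h := by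
    intro s hs
    calc ‖x s - x₀‖ ≤ M * s := key h hSh s hs
    _ ≤ M * h := mul_le_mul_of_nonneg_left hs.2 hMpos.le
  have hMhnn : 0 ≤ M * h := by positivity
  have hc : ∀ u : ℝ, HasDerivAt (fun t : ℝ => t • (F₀ x₀ + h • F₁ x₀))
      (F₀ x₀ + h • F₁ x₀) u := by
    intro u
    simpa using (hasDerivAt_id u).smul_const (F₀ x₀ + h • F₁ x₀)
  have ybound : ∀ t ∈ Icc (0:ℝ) h,
      ‖x t - x₀ - t • (F₀ x₀ + h • F₁ x₀)‖ ≤ ((K0' + K1') * (M * h)) * t := by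
    have H := norm_image_sub_le_of_norm_deriv_le_segment'
      (f := fun t => x t - t • (F₀ x₀ + h • F₁ x₀)) (a := 0) (b := h)
      (f' := fun u => (F₀ (x u) + h • F₁ (x u)) - (F₀ x₀ + h • F₁ x₀))
      (C := (K0' + K1') * (M * h))
      (fun u hu => ((hderiv u hu).sub (hc u)).hasDerivWithinAt)
      (fun u hu => by
        have hu' : u ∈ Icc (0:ℝ) h := ⟨hu.1, hu.2.le⟩
        have e : (F₀ (x u) + h • F₁ (x u)) - (F₀ x₀ + h • F₁ x₀)
            = (F₀ (x u) - F₀ x₀) + h • (F₁ (x u) - F₁ x₀) := by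
          rw [smul_sub]; abel
        show ‖F₀ (x u) + h • F₁ (x u) - (F₀ x₀ + h • F₁ x₀)‖ ≤ (K0' + K1') * (M * h)
        rw [e]
        have b0 : ‖F₀ (x u) - F₀ x₀‖ ≤ K0' * (M * h) :=
          le_trans (lip0 (x u) (hSh.2 u hu')) (mul_le_mul_of_nonneg_left (bnd u hu') hK0'pos.le)
        have b1 : ‖F₁ (x u) - F₁ x₀‖ ≤ K1' * (M * h) :=
          le_trans (lip1 (x u) (hSh.2 u hu')) (mul_le_mul_of_nonneg_left (bnd u hu') hK1'pos.le)
        calc ‖(F₀ (x u) - F₀ x₀) + h • (F₁ (x u) - F₁ x₀)‖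
            ≤ ‖F₀ (x u) - F₀ x₀‖ + ‖h • (F₁ (x u) - F₁ x₀)‖ := norm_add_le _ _
        _ ≤ K0' * (M * h) + h * (K1' * (M * h)) := by
            apply add_le_add b0
            rw [norm_smul, Real.norm_eq_abs, abs_of_nonneg hh0.le]
            exact mul_le_mul_of_nonneg_left b1 hh0.le
        _ ≤ (K0' + K1') * (M * h) := by
            nlinarith [mul_le_mul_of_nonneg_right hh_le1 (mul_nonneg hK1'pos.le hMhnn)])
    intro t ht
    have := H t ht
    simp only [hx0, zero_smul, sub_zero] at this
    calc ‖x t - x₀ - t • (F₀ x₀ + h • F₁ x₀)‖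
        = ‖x t - t • (F₀ x₀ + h • F₁ x₀) - x₀‖ := by rw [sub_right_comm]
    _ ≤ (K0' + K1') * (M * h) * t := this
  set P : ℝ := (K0' + K1') * M + max M1 0 with hPdef
  have hPpos : 0 < P := by positivity
  have xb : ∀ u ∈ Icc (0:ℝ) h, ‖x u - x₀ - u • F₀ x₀‖ ≤ P * h * h := by
    intro u hu
    have e : x u - x₀ - u • F₀ x₀
        = (x u - x₀ - u • (F₀ x₀ + h • F₁ x₀)) + u • (h • F₁ x₀) := by
      rw [smul_add]; abel
    rw [e]
    have b2 : ‖u • (h • F₁ x₀)‖ ≤ h * h * max M1 0 := by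
      rw [norm_smul, norm_smul, Real.norm_eq_abs, Real.norm_eq_abs,
        abs_of_nonneg hu.1, abs_of_nonneg hh0.le]
      have hb : ‖F₁ x₀‖ ≤ max M1 0 := le_trans (hM1 x₀ hx₀ball) (le_max_left _ _)
      calc u * (h * ‖F₁ x₀‖) ≤ h * (h * max M1 0) := by
            apply mul_le_mul hu.2 _ (by positivity) hh0.le
            exact mul_le_mul_of_nonneg_left hb hh0.le
      _ = h * h * max M1 0 := by ring
    calc ‖(x u - x₀ - u • (F₀ x₀ + h • F₁ x₀)) + u • (h • F₁ x₀)‖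
        ≤ ‖x u - x₀ - u • (F₀ x₀ + h • F₁ x₀)‖ + ‖u • (h • F₁ x₀)‖ := norm_add_le _ _
    _ ≤ ((K0' + K1') * (M * h)) * u + h * h * max M1 0 := add_le_add (ybound u hu) b2
    _ ≤ P * h * h := by
        rw [hPdef]
        have : ((K0' + K1') * (M * h)) * u ≤ ((K0' + K1') * (M * h)) * h :=
          mul_le_mul_of_nonneg_left hu.2 (by positivity)
        nlinarith
  set w : E := fderiv ℝ F₀ x₀ (F₀ x₀) with hwdef
  have hw : ∀ u : ℝ, HasDerivAt (fun t : ℝ => ((t ^ 2) / 2) • w) (u • w) u := by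
    intro u
    have h1 := ((hasDerivAt_pow 2 u).div_const 2).smul_const w
    have h2 : ((2:ℕ) * u ^ (2 - 1) / 2 : ℝ) • w = u • w := by norm_num
    rwa [h2] at h1
  set Q : ℝ := K2' * M ^ 2 + N * P + K1' * M with hQdef
  have hQpos : 0 < Q := by positivity
  have zbound : ‖(x h - h • (F₀ x₀ + h • F₁ x₀) - ((h ^ 2) / 2) • w) - x₀‖
      ≤ (Q * h ^ 2) * h := by
    have H := norm_image_sub_le_of_norm_deriv_le_segment'
      (f := fun t => x t - t • (F₀ x₀ + h • F₁ x₀) - ((t ^ 2) / 2) • w) (a := 0) (b := h)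
      (f' := fun u => ((F₀ (x u) + h • F₁ (x u)) - (F₀ x₀ + h • F₁ x₀)) - u • w)
      (C := Q * h ^ 2)
      (fun u hu => (((hderiv u hu).sub (hc u)).sub (hw u)).hasDerivWithinAt)
      (fun u hu => by
        have hu' : u ∈ Icc (0:ℝ) h := ⟨hu.1, hu.2.le⟩
        have hxu : x u ∈ closedBall x₀ 1 := hSh.2 u hu'
        have expand : fderiv ℝ F₀ x₀ (x u - x₀ - u • F₀ x₀)
            = fderiv ℝ F₀ x₀ (x u - x₀) - u • w := by
          rw [map_sub, map_smul, hwdef]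
        have e : ((F₀ (x u) + h • F₁ (x u)) - (F₀ x₀ + h • F₁ x₀)) - u • w
            = (F₀ (x u) - F₀ x₀ - fderiv ℝ F₀ x₀ (x u - x₀))
              + fderiv ℝ F₀ x₀ (x u - x₀ - u • F₀ x₀)
              + h • (F₁ (x u) - F₁ x₀) := by
          rw [expand, smul_sub]; abel
        show ‖F₀ (x u) + h • F₁ (x u) - (F₀ x₀ + h • F₁ x₀) - u • w‖ ≤ Q * h ^ 2
        rw [e]
        have a1 : ‖F₀ (x u) - F₀ x₀ - fderiv ℝ F₀ x₀ (x u - x₀)‖ ≤ K2' * M ^ 2 * h ^ 2 := by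
          calc ‖F₀ (x u) - F₀ x₀ - fderiv ℝ F₀ x₀ (x u - x₀)‖
              ≤ (K2' * ‖x u - x₀‖) * ‖x u - x₀‖ := taylor (x u) hxu
          _ ≤ (K2' * (M * h)) * (M * h) := by
              apply mul_le_mul _ (bnd u hu') (norm_nonneg _) (by positivity)
              exact mul_le_mul_of_nonneg_left (bnd u hu') hK2'pos.le
          _ = K2' * M ^ 2 * h ^ 2 := by ring
        have a2 : ‖fderiv ℝ F₀ x₀ (x u - x₀ - u • F₀ x₀)‖ ≤ N * (P * h * h) := by
          calc ‖fderiv ℝ F₀ x₀ (x u - x₀ - u • F₀ x₀)‖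
              ≤ N * ‖x u - x₀ - u • F₀ x₀‖ := (fderiv ℝ F₀ x₀).le_opNorm _
          _ ≤ N * (P * h * h) := mul_le_mul_of_nonneg_left (xb u hu') hNnn
        have a3 : ‖h • (F₁ (x u) - F₁ x₀)‖ ≤ K1' * M * h ^ 2 := by
          rw [norm_smul, Real.norm_eq_abs, abs_of_nonneg hh0.le]
          have b1 : ‖F₁ (x u) - F₁ x₀‖ ≤ K1' * (M * h) :=
            le_trans (lip1 (x u) hxu) (mul_le_mul_of_nonneg_left (bnd u hu') hK1'pos.le)
          calc h * ‖F₁ (x u) - F₁ x₀‖ ≤ h * (K1' * (M * h)) :=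
                mul_le_mul_of_nonneg_left b1 hh0.le
          _ = K1' * M * h ^ 2 := by ring
        calc ‖(F₀ (x u) - F₀ x₀ - fderiv ℝ F₀ x₀ (x u - x₀))
              + fderiv ℝ F₀ x₀ (x u - x₀ - u • F₀ x₀)
              + h • (F₁ (x u) - F₁ x₀)‖
            ≤ ‖(F₀ (x u) - F₀ x₀ - fderiv ℝ F₀ x₀ (x u - x₀))
              + fderiv ℝ F₀ x₀ (x u - x₀ - u • F₀ x₀)‖
              + ‖h • (F₁ (x u) - F₁ x₀)‖ := norm_add_le _ _
        _ ≤ (‖F₀ (x u) - F₀ x₀ - fderiv ℝ F₀ x₀ (x u - x₀)‖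
              + ‖fderiv ℝ F₀ x₀ (x u - x₀ - u • F₀ x₀)‖)
              + ‖h • (F₁ (x u) - F₁ x₀)‖ := by
            gcongr
            exact norm_add_le _ _
        _ ≤ (K2' * M ^ 2 * h ^ 2 + N * (P * h * h)) + K1' * M * h ^ 2 :=
            add_le_add (add_le_add a1 a2) a3
        _ = Q * h ^ 2 := by rw [hQdef]; ring)
    have := H h ⟨hh0.le, le_rfl⟩
    simp only [hx0, zero_smul, sub_zero, ne_eq, OfNat.ofNat_ne_zero, not_false_eq_true,
      zero_pow, zero_div] at this
    exact this
  have evec : x h - (x₀ + h • F₀ x₀)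
      = (x h - h • (F₀ x₀ + h • F₁ x₀) - ((h ^ 2) / 2) • w) - x₀ := by
    rw [hkey, hwdef]
    module
  rw [evec]
  calc ‖(x h - h • (F₀ x₀ + h • F₁ x₀) - ((h ^ 2) / 2) • w) - x₀‖
      ≤ (Q * h ^ 2) * h := zbound
  _ ≤ C₀ * h ^ 3 := by rw [hC₀def, hQdef, hPdef]; nlinarith [pow_pos hh0 3]

end Aux

open Set in
/-- A simultaneous gradient descent step in a differentiable two-player game
follows the modified continuous system of Rosca et al. with error `O(h³)`. -/
theorem simultaneous_gd_follows_modified_flow {m n : ℕ}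
    (Eφ Eθ : EuclideanSpace ℝ (Fin m) × EuclideanSpace ℝ (Fin n) → ℝ)
    (hEφ : ContDiff ℝ (⊤ : ℕ∞) Eφ) (hEθ : ContDiff ℝ (⊤ : ℕ∞) Eθ)
    (φ₀ : EuclideanSpace ℝ (Fin m)) (θ₀ : EuclideanSpace ℝ (Fin n)) :
    ∃ C > (0 : ℝ), ∃ h₀ > (0 : ℝ), ∀ h ∈ Set.Ioo (0 : ℝ) h₀,
      ∀ (φ : ℝ → EuclideanSpace ℝ (Fin m)) (θ : ℝ → EuclideanSpace ℝ (Fin n)),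
        φ 0 = φ₀ → θ 0 = θ₀ →
        (∀ t ∈ Set.Icc (0 : ℝ) h,
          HasDerivAt φ
            (-(grad₁ Eφ (φ t) (θ t))
              + h • (-(1 / 4 : ℝ) • gradient (fun x => ‖grad₁ Eφ x (θ t)‖ ^ 2) (φ t)
                  - (1 / 2 : ℝ) •
                      fderiv ℝ (fun y => grad₁ Eφ (φ t) y) (θ t)
                        (grad₂ Eθ (φ t) (θ t)))) t) →
        (∀ t ∈ Set.Icc (0 : ℝ) h,
          HasDerivAt θ
            (-(grad₂ Eθ (φ t) (θ t))
              + h • (-(1 / 4 : ℝ) • gradient (fun y => ‖grad₂ Eθ (φ t) y‖ ^ 2) (θ t)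
                  - (1 / 2 : ℝ) •
                      fderiv ℝ (fun x => grad₂ Eθ x (θ t)) (φ t)
                        (grad₁ Eφ (φ t) (θ t)))) t) →
        ‖φ h - (φ₀ - h • grad₁ Eφ φ₀ θ₀)‖ ≤ C * h ^ 3 ∧
          ‖θ h - (θ₀ - h • grad₂ Eθ φ₀ θ₀)‖ ≤ C * h ^ 3 := by
  obtain ⟨C, hC, h₀, hh₀, Hmain⟩ := main_estimate (F0 Eφ Eθ) (F1 Eφ Eθ)
    (contDiff_F0 hEφ hEθ) (contDiff_F1 hEφ hEθ) (φ₀, θ₀) rfl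
  refine ⟨C, hC, h₀, hh₀, ?_⟩
  intro h hh φ θ hφ0 hθ0 hφ' hθ'
  set x : ℝ → EuclideanSpace ℝ (Fin m) × EuclideanSpace ℝ (Fin n) :=
    fun t => (φ t, θ t) with hxdef
  have hx0 : x 0 = (φ₀, θ₀) := by rw [hxdef]; simp [hφ0, hθ0]
  have hx' : ∀ t ∈ Icc (0:ℝ) h,
      HasDerivAt x (F0 Eφ Eθ (x t) + h • F1 Eφ Eθ (x t)) t := by
    intro t ht
    have h1 := (hφ' t ht).prodMk (hθ' t ht)
    have e1 : -(1 / 4 : ℝ) • gradient (fun x => ‖grad₁ Eφ x (θ t)‖ ^ 2) (φ t)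
          - (1 / 2 : ℝ) • fderiv ℝ (fun y => grad₁ Eφ (φ t) y) (θ t)
              (grad₂ Eθ (φ t) (θ t))
        = (F1 Eφ Eθ (φ t, θ t)).1 := keyA hEφ hEθ (φ t, θ t)
    have e2 : -(1 / 4 : ℝ) • gradient (fun y => ‖grad₂ Eθ (φ t) y‖ ^ 2) (θ t)
          - (1 / 2 : ℝ) • fderiv ℝ (fun x => grad₂ Eθ x (θ t)) (φ t)
              (grad₁ Eφ (φ t) (θ t))
        = (F1 Eφ Eθ (φ t, θ t)).2 := keyB hEφ hEθ (φ t, θ t)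
    have evec : F0 Eφ Eθ (x t) + h • F1 Eφ Eθ (x t)
        = (-(grad₁ Eφ (φ t) (θ t))
              + h • (-(1 / 4 : ℝ) • gradient (fun x => ‖grad₁ Eφ x (θ t)‖ ^ 2) (φ t)
                  - (1 / 2 : ℝ) •
                      fderiv ℝ (fun y => grad₁ Eφ (φ t) y) (θ t)
                        (grad₂ Eθ (φ t) (θ t))),
           -(grad₂ Eθ (φ t) (θ t))
              + h • (-(1 / 4 : ℝ) • gradient (fun y => ‖grad₂ Eθ (φ t) y‖ ^ 2) (θ t)
                  - (1 / 2 : ℝ) •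
                      fderiv ℝ (fun x => grad₂ Eθ x (θ t)) (φ t)
                        (grad₁ Eφ (φ t) (θ t)))) := by
      refine Prod.ext ?_ ?_
      · show (F0 Eφ Eθ (x t)).1 + h • (F1 Eφ Eθ (x t)).1 = _
        rw [e1]
        rfl
      · show (F0 Eφ Eθ (x t)).2 + h • (F1 Eφ Eθ (x t)).2 = _
        rw [e2]
        rfl
    rw [evec]
    exact h1
  have Hx := Hmain h hh x hx0 hx'
  constructor
  · have e : φ h - (φ₀ - h • grad₁ Eφ φ₀ θ₀)
        = (x h - ((φ₀, θ₀) + h • F0 Eφ Eθ (φ₀, θ₀))).1 := by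
      show φ h - (φ₀ - h • grad₁ Eφ φ₀ θ₀)
          = φ h - (φ₀ + h • -(grad₁ Eφ φ₀ θ₀))
      module
    rw [e]
    exact le_trans (norm_fst_le _) Hx
  · have e : θ h - (θ₀ - h • grad₂ Eθ φ₀ θ₀)
        = (x h - ((φ₀, θ₀) + h • F0 Eφ Eθ (φ₀, θ₀))).2 := by
      show θ h - (θ₀ - h • grad₂ Eθ φ₀ θ₀)
          = θ h - (θ₀ + h • -(grad₂ Eθ φ₀ θ₀))
      module
    rw [e]
    exact le_trans (norm_snd_le _) Hx
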